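/- arXiv:0709.3784 — 3 statements merged into one kernel-verified Lean document; each statement's English description precedes it below -/
import Mathlib

section
/- Let k be an arbitrary field (of any characteristic). The field 𝕂_k of generalised Puiseux series over k is complete with respect to the norm |f| = exp(−val(f)) (with |0| = 0): every Cauchy sequence in 𝕂_k converges to an element of 𝕂_k. -/
open Classical

def IsGenPuiseuxOver (k : Type*) [Zero k] (f : HahnSeries ℝ k) : Prop :=
  ∀ M : ℝ, (f.support ∩ Set.Iic M).Finite

noncomputable def gpNormOver (k : Type*) [Zero k] (f : HahnSeries ℝ k) : ℝ :=
  if f = 0 then 0 else Real.exp (-f.order)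

/-!
`|h| < exp (-M)` says exactly that `h` has no coefficients at exponents `≤ M`. Hence in a Cauchy
sequence the coefficients on each half-line `(-∞, M]` are eventually constant, and reading them
off gives the limit. Its support meets each `(-∞, M]` where some term of the sequence does, so it
is finite there; in particular the support is well-founded, so the limit is a Hahn series.
-/

theorem Set.isWF_of_finite_inter_Iic {α : Type*} [Preorder α] {s : Set α}
    (hs : ∀ M, (s ∩ Set.Iic M).Finite) : s.IsWF := by
  rw [Set.isWF_iff_no_descending_seq]
  intro a ha_anti ha_mem
  refine Set.infinite_range_of_injective ha_anti.injective ((hs (a 0)).subset ?_)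
  rintro _ ⟨n, rfl⟩
  exact ⟨ha_mem n, ha_anti.antitone n.zero_le⟩

theorem exists_eventually_eq_on_Iic {ι β : Type*} [Preorder ι] {F : ℕ → ι → β}
    (hF : ∀ M, ∃ N, ∀ n ≥ N, ∀ m ≥ N, ∀ α ≤ M, F n α = F m α) :
    ∃ c : ι → β, ∀ M, ∃ N, ∀ n ≥ N, ∀ α ≤ M, F n α = c α := by
  choose N hN using hF
  refine ⟨fun α => F (N α) α, fun M => ⟨N M, fun n hn α hα => ?_⟩⟩
  calc F n α = F (max n (N α)) α := hN M n hn _ (hn.trans (le_max_left _ _)) α hα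
    _ = F (N α) α := hN α _ (le_max_right _ _) _ le_rfl α le_rfl

section Norm

variable {k : Type*}

theorem gpNormOver_lt_exp_neg_iff [Zero k] {h : HahnSeries ℝ k} {M : ℝ} :
    gpNormOver k h < Real.exp (-M) ↔ ∀ α ≤ M, h.coeff α = 0 := by
  by_cases h0 : h = 0
  · simp [gpNormOver, h0, Real.exp_pos]
  rw [gpNormOver, if_neg h0, Real.exp_lt_exp, neg_lt_neg_iff]
  refine ⟨fun hM α hα => HahnSeries.coeff_eq_zero_of_lt_order (hα.trans_lt hM), fun hz => ?_⟩
  by_contra! hle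
  exact h0 (HahnSeries.coeff_order_eq_zero.1 (hz _ hle))

theorem gpNormOver_lt_iff [Zero k] {h : HahnSeries ℝ k} {ε : ℝ} (hε : 0 < ε) :
    gpNormOver k h < ε ↔ ∀ α ≤ -Real.log ε, h.coeff α = 0 := by
  rw [← gpNormOver_lt_exp_neg_iff, neg_neg, Real.exp_log hε]

theorem coeff_eventually_eq_of_gpNormOver_cauchy [AddGroup k] {f : ℕ → HahnSeries ℝ k}
    (hcauchy : ∀ ε : ℝ, 0 < ε → ∃ N : ℕ, ∀ n ≥ N, ∀ m ≥ N, gpNormOver k (f n - f m) < ε)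
    (M : ℝ) : ∃ N, ∀ n ≥ N, ∀ m ≥ N, ∀ α ≤ M, (f n).coeff α = (f m).coeff α := by
  obtain ⟨N, hN⟩ := hcauchy _ (Real.exp_pos (-M))
  refine ⟨N, fun n hn m hm α hα => ?_⟩
  simpa [sub_eq_zero] using gpNormOver_lt_exp_neg_iff.1 (hN n hn m hm) α hα

end Norm

/-- For an arbitrary field `k` (of any characteristic), the field `𝕂_k` of generalised
Puiseux series over `k` is complete with respect to the norm `|f| = exp (-val f)`:
every Cauchy sequence in `𝕂_k` converges to an element of `𝕂_k`. -/
theorem genPuiseuxOver_complete (k : Type*) [Field k]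
    (f : ℕ → HahnSeries ℝ k) (hf : ∀ n, IsGenPuiseuxOver k (f n))
    (hcauchy : ∀ ε : ℝ, 0 < ε → ∃ N : ℕ, ∀ n ≥ N, ∀ m ≥ N, gpNormOver k (f n - f m) < ε) :
    ∃ g : HahnSeries ℝ k, IsGenPuiseuxOver k g ∧
      ∀ ε : ℝ, 0 < ε → ∃ N : ℕ, ∀ n ≥ N, gpNormOver k (f n - g) < ε := by
  obtain ⟨c, hc⟩ := exists_eventually_eq_on_Iic (F := fun n => (f n).coeff)
    (coeff_eventually_eq_of_gpNormOver_cauchy hcauchy)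
  have hsupp : ∀ M, (Function.support c ∩ Set.Iic M).Finite := fun M => by
    obtain ⟨N, hN⟩ := hc M
    refine (hf N M).subset fun α ⟨hα, hαM⟩ => ⟨?_, hαM⟩
    rwa [HahnSeries.mem_support, hN N le_rfl α hαM]
  let g : HahnSeries ℝ k := ⟨c, (Set.isWF_of_finite_inter_Iic hsupp).isPWO⟩
  refine ⟨g, hsupp, fun ε hε => ?_⟩
  obtain ⟨N, hN⟩ := hc (-Real.log ε)
  refine ⟨N, fun n hn => (gpNormOver_lt_iff hε).2 fun α hα => ?_⟩
  rw [HahnSeries.coeff_sub, hN n hn α hα, sub_self]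
end

section
/- The field extension ℂ ⊆ 𝕂, where 𝕂 is the field of generalised Puiseux series over ℂ, has infinite transcendence degree. -/
/-!
Write `t ^ a` for the monomial `HahnSeries.single a 1`. If `τ` is transcendental, the exponents
`τ ^ n` are linearly independent over `ℕ`, so the substitution `Xₙ ↦ t ^ (τ ^ n)` sends distinct
monomials `∏ Xₙ ^ dₙ` to distinct monomials `t ^ (∑ dₙ τ ^ n)`. The coefficient of
`t ^ (∑ dₙ τ ^ n)` in the image of a polynomial is thus its `d`-th coefficient, so a polynomial
relation among the `t ^ (τ ^ n)` is zero.
-/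

/-- A Hahn series `f : HahnSeries ℝ ℂ` is a *generalised Puiseux series* (i.e. lies in `𝕂`)
if its support has finite intersection with `(-∞, M]` for every real `M`. -/
def IsGenPuiseux (f : HahnSeries ℝ ℂ) : Prop :=
  ∀ M : ℝ, (f.support ∩ Set.Iic M).Finite

open Polynomial

theorem Transcendental.linearIndependent_pow {R A : Type*} [CommRing R] [Ring A] [Algebra R A]
    {x : A} (hx : Transcendental R x) : LinearIndependent R (x ^ · : ℕ → A) := by
  rw [linearIndependent_iff]
  intro l hl
  have hp : Polynomial.aeval x (ofFinsupp (AddMonoidAlgebra.ofCoeff l)) = 0 := by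
    rw [← hl, Polynomial.aeval_def, eval₂_eq_sum, sum_def, Finsupp.linearCombination_apply,
      Finsupp.sum]
    simp [Algebra.smul_def]
  simpa using congrArg (fun p : R[X] => p.toFinsupp.coeff) (transcendental_iff.mp hx _ hp)

namespace HahnSeries

/-- For an ordered semiring `Γ`, instance search finds `powerSeriesAlgebra` rather than the
generic algebra structure on `HahnSeries Γ R`; the two agree only propositionally. -/
theorem powerSeriesAlgebra_self_eq_instAlgebra {Γ R : Type*} [CommSemiring R] [Semiring Γ]
    [PartialOrder Γ] [IsStrictOrderedRing Γ] :
    powerSeriesAlgebra (Γ := Γ) (R := R) (S := R) = instAlgebra :=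
  Algebra.algebra_ext _ _ fun r => by
    rw [algebraMap_apply', PowerSeries.algebraMap_apply, Algebra.algebraMap_self_apply,
      ofPowerSeries_C, algebraMap_apply, Algebra.algebraMap_self_apply]

variable {Γ R ι : Type*} [AddCommMonoid Γ] [PartialOrder Γ] [IsOrderedCancelAddMonoid Γ]

theorem prod_single_one [CommSemiring R] (s : Finset ι) (e : ι → Γ) :
    ∏ i ∈ s, single (e i) (1 : R) = single (∑ i ∈ s, e i) 1 := by
  classical
  induction s using Finset.induction with
  | empty => simp
  | insert a s ha ih =>
    rw [Finset.prod_insert ha, Finset.sum_insert ha, ih, single_mul_single, one_mul]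

theorem aeval_single_one_monomial [CommSemiring R] (e : ι → Γ) (d : ι →₀ ℕ) (r : R) :
    MvPolynomial.aeval (fun i => single (e i) (1 : R)) (MvPolynomial.monomial d r) =
      single (Finsupp.linearCombination ℕ e d) r := by
  simp only [MvPolynomial.aeval_monomial, single_pow, one_pow, Finsupp.prod, prod_single_one,
    algebraMap_apply, Algebra.algebraMap_self_apply, C_apply, single_mul_single, zero_add, mul_one,
    Finsupp.linearCombination_apply, Finsupp.sum]

theorem coeff_aeval_single_one [CommSemiring R] {e : ι → Γ} (he : LinearIndependent ℕ e)
    (p : MvPolynomial ι R) (d : ι →₀ ℕ) :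
    (MvPolynomial.aeval (fun i => single (e i) (1 : R)) p).coeff (Finsupp.linearCombination ℕ e d) =
      p.coeff d := by
  induction p using MvPolynomial.induction_on' with
  | monomial u r =>
    classical
    rw [aeval_single_one_monomial, coeff_single, MvPolynomial.coeff_monomial]
    exact if_congr (he.eq_iff.trans eq_comm) rfl rfl
  | add p q hp hq => rw [map_add, coeff_add, hp, hq, MvPolynomial.coeff_add]

theorem algebraicIndependent_single_one [CommRing R] {e : ι → Γ} (he : LinearIndependent ℕ e) :
    AlgebraicIndependent R fun i => single (e i) (1 : R) :=
  algebraicIndependent_iff.2 fun p hp => MvPolynomial.ext _ _ fun d => by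
    rw [← coeff_aeval_single_one he, hp, coeff_zero, MvPolynomial.coeff_zero]

end HahnSeries

theorem isGenPuiseux_single (a : ℝ) (r : ℂ) : IsGenPuiseux (HahnSeries.single a r) := fun _ =>
  ((Set.finite_singleton a).subset HahnSeries.support_single_subset).inter_of_left _

/-- The field extension `ℂ ⊆ 𝕂` has infinite transcendence degree: there is an infinite
family of generalised Puiseux series which is algebraically independent over `ℂ`. -/
theorem genPuiseux_infinite_transcendence_degree :
    ∃ x : ℕ → HahnSeries ℝ ℂ, (∀ n, IsGenPuiseux (x n)) ∧ AlgebraicIndependent ℂ x := by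
  have hτ : Transcendental ℤ (liouvilleNumber 2) := transcendental_liouvilleNumber (m := 2) le_rfl
  have hexp : LinearIndependent ℕ (liouvilleNumber 2 ^ · : ℕ → ℝ) :=
    hτ.linearIndependent_pow.restrict_scalars' (R := ℕ) (K := ℤ)
  refine ⟨fun n => HahnSeries.single (liouvilleNumber 2 ^ n) 1, fun n => isGenPuiseux_single _ _, ?_⟩
  rw [HahnSeries.powerSeriesAlgebra_self_eq_instAlgebra]
  exact HahnSeries.algebraicIndependent_single_one hexp
end

section
/- Let f be an element of the field 𝕂 of generalised Puiseux series over ℂ with val(f) > 0, and let G = Σ_{n=0}^∞ aₙ·zⁿ ∈ ℂ[[z]] be a formal power series. Then the family (aₙ·fⁿ)_{n∈ℕ} is summable in the Hahn series field HahnSeries ℝ ℂ (for each exponent γ only finitely many terms have γ in their support, and the union of the supports is well-ordered), and its sum G(f) = Σ_{n=0}^∞ aₙ·fⁿ again lies in 𝕂. -/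
/-!
Every power `fⁿ` lies in `𝕂`, since `𝕂` is closed under multiplication. As `val (fⁿ) = n · val f`
with `val f > 0`, an exponent `γ ≤ M` can only occur in the terms `aₙ fⁿ` with `n · val f ≤ M`,
which are finitely many, so the support of `G(f)` meets `(-∞, M]` in a finite set.
-/

open HahnSeries

namespace IsGenPuiseux

lemma mono {x y : HahnSeries ℝ ℂ} (hx : IsGenPuiseux x) (h : y.support ⊆ x.support) :
    IsGenPuiseux y :=
  fun M => (hx M).subset (Set.inter_subset_inter_left _ h)

lemma one : IsGenPuiseux 1 :=
  fun _ => (Set.finite_singleton 0).subset (Set.inter_subset_left.trans support_one.subset)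

/-- A support point `u + v ≤ M` of `x * y` has `u ≤ M - order y` and `v ≤ M - order x`. -/
lemma mul {x y : HahnSeries ℝ ℂ} (hx : IsGenPuiseux x) (hy : IsGenPuiseux y) :
    IsGenPuiseux (x * y) := by
  intro M
  rcases eq_or_ne x 0 with rfl | -
  · simp
  rcases eq_or_ne y 0 with rfl | -
  · simp
  refine ((hx (M - y.order)).add (hy (M - x.order))).subset ?_
  rintro _ ⟨hγ, hγM⟩
  obtain ⟨u, hu, v, hv, rfl⟩ := support_mul_subset hγ
  have hxu : x.order ≤ u := order_le_of_coeff_ne_zero hu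
  have hyv : y.order ≤ v := order_le_of_coeff_ne_zero hv
  rw [Set.mem_Iic] at hγM
  exact ⟨u, ⟨hu, by rw [Set.mem_Iic]; linarith⟩, v, ⟨hv, by rw [Set.mem_Iic]; linarith⟩, rfl⟩

lemma pow {x : HahnSeries ℝ ℂ} (hx : IsGenPuiseux x) (n : ℕ) : IsGenPuiseux (x ^ n) := by
  induction n with
  | zero => exact pow_zero x ▸ one
  | succ n ih => exact pow_succ x n ▸ ih.mul hx

lemma hsum {α : Type*} {s : SummableFamily ℝ ℂ α} (hs : ∀ a, IsGenPuiseux (s a))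
    (hfin : ∀ M, {a | ((s a).support ∩ Set.Iic M).Nonempty}.Finite) :
    IsGenPuiseux s.hsum := by
  intro M
  refine ((hfin M).biUnion fun a _ => hs a M).subset ?_
  rintro γ ⟨hγ, hγM⟩
  obtain ⟨a, hγa⟩ := Set.mem_iUnion.mp (SummableFamily.support_hsum_subset hγ)
  exact Set.mem_biUnion (x := a) ⟨γ, hγa, hγM⟩ ⟨hγa, hγM⟩

end IsGenPuiseux

lemma HahnSeries.finite_setOf_support_pow_inter_Iic_nonempty {Γ R : Type*} [AddCommGroup Γ]
    [LinearOrder Γ] [IsOrderedAddMonoid Γ] [Archimedean Γ] [Semiring R] [NoZeroDivisors R]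
    {x : HahnSeries Γ R} (hx : 0 < x.orderTop) (M : Γ) :
    {n : ℕ | ((x ^ n).support ∩ Set.Iic M).Nonempty}.Finite := by
  rcases eq_or_ne x 0 with rfl | hx0
  · refine (Set.finite_singleton 0).subset fun n ⟨γ, hγ, _⟩ => ?_
    by_contra hn
    simp [zero_pow hn] at hγ
  have hpos : 0 < x.order := (zero_lt_orderTop_iff hx0).mp hx
  obtain ⟨N, hN⟩ := Archimedean.arch M hpos
  refine (Set.finite_Iic N).subset fun n ⟨γ, hγ, hγM⟩ => ?_
  by_contra! hNn
  rw [Set.mem_Iic, not_le, ← Nat.succ_le_iff] at hNn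
  have : N • x.order + x.order ≤ N • x.order :=
    calc N • x.order + x.order = (N + 1) • x.order := (succ_nsmul _ _).symm
      _ ≤ n • x.order := nsmul_le_nsmul_left hpos.le hNn
      _ = (x ^ n).order := (order_pow x n).symm
      _ ≤ γ := order_le_of_coeff_ne_zero hγ
      _ ≤ M := hγM
      _ ≤ N • x.order := hN
  exact (lt_add_of_pos_right _ hpos).not_ge this

/-- If `f ∈ 𝕂` satisfies `val f > 0` (i.e. `f = 0` or the order of `f` is strictly
positive) and `G = Σ aₙ zⁿ ∈ ℂ[[z]]` is a formal power series, then the family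
`(aₙ • fⁿ)ₙ` is summable in `HahnSeries ℝ ℂ` (for each exponent only finitely many terms
have a nonzero coefficient there, and the union of the supports is well-ordered, i.e. it
forms a `HahnSeries.SummableFamily`), and its sum `G(f)` again lies in `𝕂`. -/
theorem genPuiseux_powerSeries_substitution (f : HahnSeries ℝ ℂ) (hf : IsGenPuiseux f)
    (hpos : 0 < f.orderTop) (G : PowerSeries ℂ) :
    ∃ s : HahnSeries.SummableFamily ℝ ℂ ℕ,
      (∀ n : ℕ, s n = (PowerSeries.coeff n G) • f ^ n) ∧ IsGenPuiseux s.hsum := by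
  have hterm := SummableFamily.powerSeriesFamily_of_orderTop_pos hpos G
  refine ⟨SummableFamily.powerSeriesFamily f G, hterm, IsGenPuiseux.hsum (fun n => ?_) fun M => ?_⟩
  · exact hterm n ▸ (hf.pow n).mono (support_smul_subset _ _)
  · refine (finite_setOf_support_pow_inter_Iic_nonempty hpos M).subset fun n hn => ?_
    rw [Set.mem_ofPred_eq, hterm n] at hn
    exact hn.mono (Set.inter_subset_inter_left _ (support_smul_subset _ _))
end
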